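/- arXiv:1803.03158 — 4 statements merged into one kernel-verified Lean document; each statement's English description precedes it below -/
import Mathlib

section
/- The polynomials (kn+0)^k, (kn+1)^k, …, (kn+k-1)^k, regarded modulo constants (i.e., their vectors of coefficients of n^1,…,n^k), form a basis of ℚ^k for every k ≥ 1. -/
/-!
The coefficient vector of `(kn+j)^k` in degrees `1,…,k` is the row of a Vandermonde matrix in
the distinct nodes `j = 0,…,k-1`, read in reverse order and with column `i` scaled by the
nonzero factor `C(k,i+1)·k^(i+1)`. Its determinant is therefore a nonzero multiple of the
Vandermonde determinant, so the `k` vectors are independent and hence a basis of `ℚ^k`.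
-/

open Matrix

theorem Matrix.det_projVandermonde_one_ne_zero {R : Type*} [CommRing R] [IsDomain R] {n : ℕ}
    {x : Fin n → R} (hx : Function.Injective x) : (projVandermonde 1 x).det ≠ 0 := by
  simp only [det_projVandermonde, Pi.one_apply, one_mul, Finset.prod_ne_zero_iff,
    Finset.mem_Ioi, sub_ne_zero]
  exact fun i _ j hij => hx.ne hij.ne

theorem linearIndependent_mul_pow_rev {K : Type*} [Field K] {n : ℕ} {x : Fin n → K}
    (hx : Function.Injective x) {c : Fin n → K} (hc : ∀ i, c i ≠ 0) :
    LinearIndependent K (fun j i : Fin n => c i * x j ^ (n - ((i : ℕ) + 1))) := by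
  have hdet : (of fun j i : Fin n => c i * projVandermonde 1 x j i).det ≠ 0 := by
    rw [det_mul_row]
    exact mul_ne_zero (Finset.prod_ne_zero_iff.mpr fun i _ => hc i)
      (det_projVandermonde_one_ne_zero hx)
  have hunit := (isUnit_iff_isUnit_det _).mpr hdet.isUnit
  simpa [projVandermonde_apply, Fin.val_rev] using linearIndependent_rows_iff_isUnit.mpr hunit

theorem shifted_powers_basis_general (k : ℕ) :
    LinearIndependent ℚ (fun j i : Fin k =>
        (k.choose ((i : ℕ) + 1) : ℚ) * (k : ℚ) ^ ((i : ℕ) + 1) *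
          (j : ℚ) ^ (k - ((i : ℕ) + 1))) ∧
    Submodule.span ℚ (Set.range (fun j i : Fin k =>
        (k.choose ((i : ℕ) + 1) : ℚ) * (k : ℚ) ^ ((i : ℕ) + 1) *
          (j : ℚ) ^ (k - ((i : ℕ) + 1)))) = ⊤ := by
  have hc (i : Fin k) : (k.choose ((i : ℕ) + 1) : ℚ) * (k : ℚ) ^ ((i : ℕ) + 1) ≠ 0 :=
    mul_ne_zero (Nat.cast_ne_zero.mpr (Nat.choose_pos i.isLt).ne')
      (pow_ne_zero _ (Nat.cast_ne_zero.mpr (Fin.pos i).ne'))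
  have hli := linearIndependent_mul_pow_rev (fun a b h => Fin.ext (Nat.cast_injective h)) hc
  exact ⟨hli, hli.span_eq_top_of_card_eq_finrank' (by simp)⟩

/-- The polynomials `(kn+0)^k, (kn+1)^k, …, (kn+k-1)^k`, regarded modulo constants
(i.e. via their vectors of coefficients of `n^1,…,n^k`, where the coefficient of
`nⁱ` in `(kn+j)^k` is `C(k,i)·kⁱ·j^{k-i}`), form a basis of `ℚ^k` for every `k ≥ 1`. -/
theorem shifted_powers_basis (k : ℕ) (hk : 1 ≤ k) :
    LinearIndependent ℚ (fun j i : Fin k =>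
        (k.choose ((i : ℕ) + 1) : ℚ) * (k : ℚ) ^ ((i : ℕ) + 1) *
          (j : ℚ) ^ (k - ((i : ℕ) + 1))) ∧
    Submodule.span ℚ (Set.range (fun j i : Fin k =>
        (k.choose ((i : ℕ) + 1) : ℚ) * (k : ℚ) ^ ((i : ℕ) + 1) *
          (j : ℚ) ^ (k - ((i : ℕ) + 1)))) = ⊤ :=
  shifted_powers_basis_general k
end

section
/- Comparing coefficients forces a power-mean contradiction: let k ≥ 3, ℓ ≥ 1, n₀ ∈ ℕ, and suppose there exist h ≥ 2, rationals c₀,…,c_{h-1} ≥ 0 with at least two cᵢ nonzero, and pairwise distinct rationals d₀,…,d_{h-1} ≥ 0 such that ∑ᵢ cᵢ/ℓ^k = 1, ∑ᵢ (cᵢ/ℓ^k) dᵢ = n₀/ℓ, and ∑ᵢ (cᵢ/ℓ^k) dᵢ^{k-1} = (n₀/ℓ)^{k-1}. Then we have a contradiction (no such data exist). -/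
open Finset

theorem Real.eq_of_pow_sum_mul_eq_sum_mul_pow {ι : Type*} {t : Finset ι} {w p : ι → ℝ} {n : ℕ}
    (hn : 2 ≤ n) (hw : ∀ i ∈ t, 0 ≤ w i) (hw₁ : ∑ i ∈ t, w i = 1) (hp : ∀ i ∈ t, 0 ≤ p i)
    (heq : (∑ i ∈ t, w i * p i) ^ n = ∑ i ∈ t, w i * p i ^ n) {i j : ι} (hi : i ∈ t)
    (hj : j ∈ t) (hwi : w i ≠ 0) (hwj : w j ≠ 0) : p i = p j :=
  ((strictConvexOn_pow hn).map_sum_eq_iff_of_nonneg hw hw₁ hp).1 heq hi hwi hj hwj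

theorem Rat.eq_of_pow_sum_mul_eq_sum_mul_pow {ι : Type*} {t : Finset ι} {w p : ι → ℚ} {n : ℕ}
    (hn : 2 ≤ n) (hw : ∀ i ∈ t, 0 ≤ w i) (hw₁ : ∑ i ∈ t, w i = 1) (hp : ∀ i ∈ t, 0 ≤ p i)
    (heq : (∑ i ∈ t, w i * p i) ^ n = ∑ i ∈ t, w i * p i ^ n) {i j : ι} (hi : i ∈ t)
    (hj : j ∈ t) (hwi : w i ≠ 0) (hwj : w j ≠ 0) : p i = p j := by
  have := Real.eq_of_pow_sum_mul_eq_sum_mul_pow (w := fun i ↦ (w i : ℝ)) (p := fun i ↦ (p i : ℝ))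
    hn (by exact_mod_cast hw) (by exact_mod_cast hw₁) (by exact_mod_cast hp)
    (by exact_mod_cast heq) hi hj (by exact_mod_cast hwi) (by exact_mod_cast hwj)
  exact_mod_cast this

theorem power_mean_contradiction_general (k ℓ n₀ h : ℕ) (hk : 3 ≤ k)
    (c d : Fin h → ℚ)
    (hc : ∀ i, 0 ≤ c i) (hd : ∀ i, 0 ≤ d i)
    (hdist : Function.Injective d)
    (htwo : ∃ i j, i ≠ j ∧ c i ≠ 0 ∧ c j ≠ 0)
    (h1 : ∑ i, c i / (ℓ : ℚ) ^ k = 1)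
    (h2 : ∑ i, (c i / (ℓ : ℚ) ^ k) * d i = (n₀ : ℚ) / ℓ)
    (h3 : ∑ i, (c i / (ℓ : ℚ) ^ k) * d i ^ (k - 1) = ((n₀ : ℚ) / ℓ) ^ (k - 1)) :
    False := by
  obtain ⟨i, j, hij, hci, hcj⟩ := htwo
  have hℓk : (ℓ : ℚ) ^ k ≠ 0 := fun h0 ↦ by simp [h0] at h1
  have hmean : (∑ i, (c i / (ℓ : ℚ) ^ k) * d i) ^ (k - 1)
      = ∑ i, (c i / (ℓ : ℚ) ^ k) * d i ^ (k - 1) := by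
    rw [h2, h3]
  exact hij <| hdist <| Rat.eq_of_pow_sum_mul_eq_sum_mul_pow (by omega)
    (fun m _ ↦ div_nonneg (hc m) (by positivity)) h1 (fun m _ ↦ hd m) hmean (mem_univ i)
    (mem_univ j) (div_ne_zero hci hℓk) (div_ne_zero hcj hℓk)

/-- Comparing coefficients forces a power-mean contradiction: no data
`c₀,…,c_{h-1} ≥ 0` (at least two nonzero) and pairwise distinct `d₀,…,d_{h-1} ≥ 0`
can satisfy `∑ cᵢ/ℓ^k = 1`, `∑ (cᵢ/ℓ^k) dᵢ = n₀/ℓ` and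
`∑ (cᵢ/ℓ^k) dᵢ^{k-1} = (n₀/ℓ)^{k-1}` when `k ≥ 3`. -/
theorem power_mean_contradiction (k ℓ n₀ h : ℕ) (hk : 3 ≤ k) (hℓ : 1 ≤ ℓ)
    (hh : 2 ≤ h) (c d : Fin h → ℚ)
    (hc : ∀ i, 0 ≤ c i) (hd : ∀ i, 0 ≤ d i)
    (hdist : Function.Injective d)
    (htwo : ∃ i j, i ≠ j ∧ c i ≠ 0 ∧ c j ≠ 0)
    (h1 : ∑ i, c i / (ℓ : ℚ) ^ k = 1)
    (h2 : ∑ i, (c i / (ℓ : ℚ) ^ k) * d i = (n₀ : ℚ) / ℓ)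
    (h3 : ∑ i, (c i / (ℓ : ℚ) ^ k) * d i ^ (k - 1) = ((n₀ : ℚ) / ℓ) ^ (k - 1)) :
    False :=
  power_mean_contradiction_general k ℓ n₀ h hk c d hc hd hdist htwo h1 h2 h3
end

section
/- If a finite-state transducer A is predetermined by a finite word w, then for every infinite word w', if the output λ(q₀, w·w') is infinite then it is ultimately periodic. -/
/-- A sequential finite-state transducer with input alphabet `S`,
output alphabet `G`, a finite set of states, an initial state,
a transition function and an output function. -/
structure FST (S G : Type) where
  Q : Type
  [fin : Fintype Q]
  init : Q
  tr : Q → S → Q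
  out : Q → S → List G

namespace FST

variable {S G : Type}

/-- Extended transition function on finite words. -/
def trL (A : FST S G) : A.Q → List S → A.Q
  | q, [] => q
  | q, a :: u => A.trL (A.tr q a) u

/-- Extended output function on finite words. -/
def outL (A : FST S G) : A.Q → List S → List G
  | _, [] => []
  | q, a :: u => A.out q a ++ A.outL (A.tr q a) u

/-- Output produced from the initial state on the length-`m` prefix of the
infinite input word `w`. -/
def outOn (A : FST S G) (w : ℕ → S) (m : ℕ) : List G :=
  A.outL A.init ((List.range m).map w)

/-- `A.Transduces w u` : running `A` on the infinite word `w` produces the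
infinite word `u` (every letter of `u` eventually appears in the output of a
sufficiently long prefix of `w`). -/
def Transduces (A : FST S G) (w : ℕ → S) (u : ℕ → G) : Prop :=
  ∀ n : ℕ, ∃ m : ℕ, (A.outOn w m)[n]? = some (u n)

end FST

/-- An infinite word (or function) is ultimately periodic. -/
def UltimatelyPeriodic {α : Type} (u : ℕ → α) : Prop :=
  ∃ N q : ℕ, 1 ≤ q ∧ ∀ n, N ≤ n → u (n + q) = u n

/-- Concatenation of a finite word with an infinite word. -/
def catStream {S : Type} (w : List S) (w' : ℕ → S) : ℕ → S :=
  fun n => if h : n < w.length then w.get ⟨n, h⟩ else w' (n - w.length)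

/-- `A` is predetermined by the finite word `w`: there is a single infinite word
`u` such that the output on `w·w'` is a prefix of `u` for every finite `w'`. -/
def Predetermined {S G : Type} (A : FST S G) (w : List S) : Prop :=
  ∃ u : ℕ → G, ∀ w' : List S, ∀ i (h : i < (A.outL A.init (w ++ w')).length),
    (A.outL A.init (w ++ w')).get ⟨i, h⟩ = u i

/-!
Some state `q` recurs infinitely often along the run on `w·w'`, so beyond `w` there are positions
`m < m'` at which the run is in `q` and between which the output strictly grows. The input factor
`x` read between them loops at `q` with nonempty output `y`; hence for every `k` the output on
the length-`m` prefix of `w·w'` followed by `xᵏ` is `p·yᵏ`, with `p` the output at `m`.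
All these words are prefixes of the predetermined `u`, which is therefore `p·y^ω`.
-/

def List.IsPrefixOfSeq {α : Type} (l : List α) (u : ℕ → α) : Prop :=
  ∀ i (h : i < l.length), l[i] = u i

namespace List.IsPrefixOfSeq

variable {α : Type} {l : List α} {u : ℕ → α}

theorem getElem?_eq (h : l.IsPrefixOfSeq u) {i : ℕ} (hi : i < l.length) :
    l[i]? = some (u i) := by
  rw [List.getElem?_eq_getElem hi, h i hi]

theorem ultimatelyPeriodic {p y : List α} (hy : y ≠ [])
    (h : ∀ k, (p ++ (List.replicate k y).flatten).IsPrefixOfSeq u) : UltimatelyPeriodic u := by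
  refine ⟨p.length, y.length, List.length_pos_of_ne_nil hy, fun n hn => ?_⟩
  obtain ⟨j, rfl⟩ := Nat.exists_eq_add_of_le hn
  set Y := (List.replicate (j + 1) y).flatten
  have hjY : j < Y.length := by
    simp only [Y, List.length_flatten, List.map_replicate, List.sum_replicate, smul_eq_mul]
    nlinarith [List.length_pos_of_ne_nil hy]
  -- `y ++ Y` and `Y ++ y` are both `y^(j+2)`: read position `j` of `Y` in each of them
  have hyY : (List.replicate (j + 2) y).flatten = y ++ Y := by
    simp only [Y, List.replicate_succ, List.flatten_cons]
  have hYy : (List.replicate (j + 2) y).flatten = Y ++ y := by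
    simp only [Y, List.replicate_succ' (n := j + 1), List.flatten_append, List.flatten_singleton]
  have hshift := getElem?_eq (h (j + 2)) (i := p.length + j + y.length) (by simp [hyY]; omega)
  have hbase := getElem?_eq (h (j + 2)) (i := p.length + j) (by simp [hyY]; omega)
  rw [hyY, ← List.append_assoc, List.getElem?_append_right (by simp)] at hshift
  rw [hYy, ← List.append_assoc, List.getElem?_append_left (by simp; omega),
    List.getElem?_append_right (by simp)] at hbase
  simp only [List.length_append] at hshift hbase
  rw [show p.length + j + y.length - (p.length + y.length) = j by omega] at hshift
  rw [Nat.add_sub_cancel_left] at hbase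
  exact Option.some_injective _ (hshift.symm.trans hbase)

end List.IsPrefixOfSeq

theorem List.map_range_add {α : Type} (s : ℕ → α) (m k : ℕ) :
    (List.range (m + k)).map s =
      (List.range m).map s ++ (List.range k).map (fun i => s (m + i)) := by
  rw [List.range_add, List.map_append, List.map_map]
  rfl

theorem map_range_catStream {S : Type} (w : List S) (w' : ℕ → S) {m : ℕ}
    (h : w.length ≤ m) :
    (List.range m).map (catStream w w') = w ++ (List.range (m - w.length)).map w' := by
  obtain ⟨k, rfl⟩ := Nat.exists_eq_add_of_le h
  rw [List.map_range_add, Nat.add_sub_cancel_left]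
  congr 1
  · refine List.ext_getElem (by simp) fun i h _ => ?_
    simp only [List.length_map, List.length_range] at h
    simp [catStream, h]
  · exact List.map_congr_left fun i _ => by simp [catStream]

namespace FST

variable {S G : Type} (A : FST S G)

theorem trL_append (q : A.Q) (x y : List S) : A.trL q (x ++ y) = A.trL (A.trL q x) y := by
  induction x generalizing q with
  | nil => rfl
  | cons a x ih => exact ih _

theorem outL_append (q : A.Q) (x y : List S) :
    A.outL q (x ++ y) = A.outL q x ++ A.outL (A.trL q x) y := by
  induction x generalizing q with
  | nil => rfl
  | cons a x ih => simp [outL, trL, ih]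

theorem outL_flatten_replicate {q : A.Q} {x : List S} (hx : A.trL q x = q) (k : ℕ) :
    A.outL q (List.replicate k x).flatten = (List.replicate k (A.outL q x)).flatten := by
  induction k with
  | zero => rfl
  | succ k ih =>
    rw [List.replicate_succ, List.flatten_cons, outL_append, hx, ih, List.replicate_succ,
      List.flatten_cons]

def stateOn (s : ℕ → S) (m : ℕ) : A.Q :=
  A.trL A.init ((List.range m).map s)

theorem stateOn_add (s : ℕ → S) (m k : ℕ) :
    A.stateOn s (m + k) = A.trL (A.stateOn s m) ((List.range k).map (fun i => s (m + i))) := by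
  rw [stateOn, List.map_range_add, trL_append, stateOn]

theorem outOn_add (s : ℕ → S) (m k : ℕ) :
    A.outOn s (m + k) =
      A.outOn s m ++ A.outL (A.stateOn s m) ((List.range k).map (fun i => s (m + i))) := by
  rw [outOn, List.map_range_add, outL_append, outOn, stateOn]

theorem length_outOn_mono (s : ℕ → S) : Monotone fun m => (A.outOn s m).length := by
  intro m m' h
  obtain ⟨k, rfl⟩ := Nat.exists_eq_add_of_le h
  simp only [outOn_add, List.length_append, Nat.le_add_right]

theorem exists_loop (s : ℕ → S) (hinf : ∀ n, ∃ m, n < (A.outOn s m).length) (N : ℕ) :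
    ∃ m k, N ≤ m ∧ A.stateOn s (m + k) = A.stateOn s m ∧
      (A.outOn s m).length < (A.outOn s (m + k)).length := by
  have := A.fin
  obtain ⟨q, hq⟩ := Finite.exists_infinite_fiber (A.stateOn s)
  rw [Set.infinite_coe_iff] at hq
  obtain ⟨m, hm, hNm⟩ := hq.exists_gt N
  obtain ⟨M, hM⟩ := hinf (A.outOn s m).length
  obtain ⟨m', hm', hm'M⟩ := hq.exists_gt (max m M)
  obtain ⟨k, rfl⟩ := Nat.exists_eq_add_of_le (le_of_max_le_left hm'M.le)
  exact ⟨m, k, hNm.le, hm'.trans hm.symm,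
    hM.trans_le (A.length_outOn_mono s (le_of_max_le_right hm'M.le))⟩

variable {w : List S} {w' : ℕ → S} {u : ℕ → G}

theorem transduces_of_forall_isPrefixOfSeq
    (hu : ∀ v, (A.outL A.init (w ++ v)).IsPrefixOfSeq u)
    (hinf : ∀ n, ∃ m, n < (A.outOn (catStream w w') m).length) :
    A.Transduces (catStream w w') u := by
  intro n
  obtain ⟨m, hm⟩ := hinf n
  refine ⟨max m w.length, ?_⟩
  have hn : n < (A.outOn (catStream w w') (max m w.length)).length :=
    hm.trans_le (A.length_outOn_mono _ (le_max_left m w.length))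
  rw [outOn, map_range_catStream w w' (le_max_right m w.length)] at hn ⊢
  exact (hu _).getElem?_eq hn

theorem ultimatelyPeriodic_of_forall_isPrefixOfSeq
    (hu : ∀ v, (A.outL A.init (w ++ v)).IsPrefixOfSeq u)
    (hinf : ∀ n, ∃ m, n < (A.outOn (catStream w w') m).length) :
    UltimatelyPeriodic u := by
  obtain ⟨m, k, hwm, hloop, hgrow⟩ := A.exists_loop (catStream w w') hinf w.length
  set x := (List.range k).map (fun i => catStream w w' (m + i))
  have hx : A.trL (A.stateOn (catStream w w') m) x = A.stateOn (catStream w w') m := by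
    rw [← stateOn_add, hloop]
  refine List.IsPrefixOfSeq.ultimatelyPeriodic (p := A.outOn (catStream w w') m)
    (y := A.outL (A.stateOn (catStream w w') m) x) ?_ fun j => ?_
  · rintro hnil
    rw [outOn_add, hnil, List.append_nil] at hgrow
    exact hgrow.false
  · have := hu ((List.range (m - w.length)).map w' ++ (List.replicate j x).flatten)
    rwa [← List.append_assoc, ← map_range_catStream w w' hwm, outL_append, ← outOn,
      ← stateOn, outL_flatten_replicate _ hx] at this

end FST

/-- If `A` is predetermined by `w`, then for every infinite word `w'`, if the
output on `w·w'` is infinite then it is ultimately periodic. -/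
theorem predetermined_output_ultimately_periodic {S G : Type} (A : FST S G)
    (w : List S) (hpred : Predetermined A w) (w' : ℕ → S)
    (hinf : ∀ n : ℕ, ∃ m : ℕ, n < (A.outOn (catStream w w') m).length) :
    ∃ u : ℕ → G, A.Transduces (catStream w w') u ∧ UltimatelyPeriodic u := by
  obtain ⟨u, hu⟩ := hpred
  exact ⟨u, A.transduces_of_forall_isPrefixOfSeq hu hinf,
    A.ultimatelyPeriodic_of_forall_isPrefixOfSeq hu hinf⟩
end

section
/- For k ≥ 3, the identity n^k = ∑_{i=0}^{h-1} cᵢ (n + dᵢ)^k + b cannot hold for all n ∈ ℕ when the cᵢ ≥ 0 include at least two nonzero values and the dᵢ ≥ 0 are pairwise distinct rationals with b ∈ ℚ, unless it reduces to a single term: i.e., if p(n) = (n+n₀)^k equals b + ∑_{i<h} cᵢ(n+dᵢ)^k for all n with cᵢ ≥ 0, dᵢ distinct, then at most one cᵢ is nonzero. -/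
/-!
Two polynomials agreeing at every natural number are equal, so comparing the coefficients of
`nᵏ⁻ᵉ` shows that the weights `cᵢ` have the moments of a point mass at `n₀`:
`∑ cᵢ dᵢᵉ = n₀ᵉ` for all `e < k`. The moments `e = 0, 1, k - 1` say that equality holds in
Jensen's inequality for the strictly convex function `t ↦ tᵏ⁻¹` on `[0, ∞)` (here `k ≥ 3`), which
forces all points `dᵢ` of nonzero weight to coincide.
-/

open Polynomial Finset

theorem Polynomial.eq_of_forall_eval_natCast_eq {R : Type*} [CommRing R] [IsDomain R]
    [CharZero R] {p q : R[X]} (h : ∀ n : ℕ, p.eval (n : R) = q.eval (n : R)) : p = q :=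
  eq_of_infinite_eval_eq p q <|
    (Set.infinite_range_of_injective Nat.cast_injective).mono (by rintro _ ⟨n, rfl⟩; exact h n)

section Moments

variable {K ι : Type*} [Field K] [CharZero K] {s : Finset ι} {k : ℕ} {a b : K} {c d : ι → K}

theorem X_add_C_pow_eq_of_forall_natCast
    (h : ∀ n : ℕ, ((n : K) + a) ^ k = b + ∑ i ∈ s, c i * ((n : K) + d i) ^ k) :
    (X + C a) ^ k = C b + ∑ i ∈ s, C (c i) * (X + C (d i)) ^ k :=
  eq_of_forall_eval_natCast_eq fun n => by simpa [eval_finsetSum] using h n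

theorem sum_mul_pow_eq_pow_of_forall_natCast
    (h : ∀ n : ℕ, ((n : K) + a) ^ k = b + ∑ i ∈ s, c i * ((n : K) + d i) ^ k)
    {e : ℕ} (he : e < k) : ∑ i ∈ s, c i * d i ^ e = a ^ e := by
  have hcoeff := congrArg (coeff · (k - e)) (X_add_C_pow_eq_of_forall_natCast h)
  have hchoose : (k.choose (k - e) : K) ≠ 0 := Nat.cast_ne_zero.2 (Nat.choose_pos (by omega)).ne'
  simp only [coeff_X_add_C_pow, finsetSum_coeff, coeff_add, coeff_C_mul, coeff_C,
    if_neg (show k - e ≠ 0 by omega), zero_add, Nat.sub_sub_self he.le] at hcoeff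
  simp_rw [← mul_assoc, ← sum_mul] at hcoeff
  exact (mul_right_cancel₀ hchoose hcoeff).symm

end Moments

theorem eq_sum_mul_of_sum_mul_pow_eq_pow_sum_mul {ι : Type*} {s : Finset ι} {w p : ι → ℝ}
    {m : ℕ} (hm : 2 ≤ m) (hw : ∀ i ∈ s, 0 ≤ w i) (hw₁ : ∑ i ∈ s, w i = 1)
    (hp : ∀ i ∈ s, 0 ≤ p i) (h : ∑ i ∈ s, w i * p i ^ m = (∑ i ∈ s, w i * p i) ^ m) :
    ∀ j ∈ s, w j ≠ 0 → p j = ∑ i ∈ s, w i * p i :=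
  ((strictConvexOn_pow hm).map_sum_eq_iff' hw hw₁ hp).1 h.symm

theorem single_term_decomposition_general (k h : ℕ) (hk : 3 ≤ k)
    (n₀ b : ℚ) (c d : Fin h → ℚ)
    (hc : ∀ i, 0 ≤ c i) (hd : ∀ i, 0 ≤ d i) (hdist : Function.Injective d)
    (heq : ∀ n : ℕ, ((n : ℚ) + n₀) ^ k = b + ∑ i, c i * ((n : ℚ) + d i) ^ k) :
    ∀ i j, c i ≠ 0 → c j ≠ 0 → i = j := by
  intro i j hi hj
  have heqℝ : ∀ n : ℕ, ((n : ℝ) + n₀) ^ k = b + ∑ i, (c i : ℝ) * ((n : ℝ) + d i) ^ k :=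
    fun n => by exact_mod_cast congrArg ((↑) : ℚ → ℝ) (heq n)
  have moment {e : ℕ} (he : e < k) : ∑ i, (c i : ℝ) * (d i : ℝ) ^ e = (n₀ : ℝ) ^ e :=
    sum_mul_pow_eq_pow_of_forall_natCast heqℝ he
  have mean : ∑ i, (c i : ℝ) * d i = n₀ := by simpa using moment (e := 1) (by omega)
  have jensen := eq_sum_mul_of_sum_mul_pow_eq_pow_sum_mul (s := univ) (w := fun i => (c i : ℝ))
    (p := fun i => (d i : ℝ)) (m := k - 1) (by omega)
    (fun i _ => by exact_mod_cast hc i) (by simpa using moment (e := 0) (by omega))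
    (fun i _ => by exact_mod_cast hd i) (by rw [mean]; exact moment (by omega))
  have hdij := (jensen i (mem_univ i) (by exact_mod_cast hi)).trans
    (jensen j (mem_univ j) (by exact_mod_cast hj)).symm
  exact hdist (by exact_mod_cast hdij)

/-- For `k ≥ 3`, if `(n+n₀)^k = b + ∑_{i<h} cᵢ(n+dᵢ)^k` holds for all `n ∈ ℕ`
with `cᵢ ≥ 0` and the `dᵢ` pairwise distinct and nonnegative, then at most one
`cᵢ` is nonzero. -/
theorem single_term_decomposition (k h : ℕ) (hk : 3 ≤ k)
    (n₀ b : ℚ) (hn₀ : 0 ≤ n₀) (c d : Fin h → ℚ)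
    (hc : ∀ i, 0 ≤ c i) (hd : ∀ i, 0 ≤ d i) (hdist : Function.Injective d)
    (heq : ∀ n : ℕ, ((n : ℚ) + n₀) ^ k = b + ∑ i, c i * ((n : ℚ) + d i) ^ k) :
    ∀ i j, c i ≠ 0 → c j ≠ 0 → i = j :=
  single_term_decomposition_general k h hk n₀ b c d hc hd hdist heq
end
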